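/- There exist four points in ℝ² with pairwise integer distances, no three collinear and no four concyclic, whose largest pairwise distance is 8, and any such four-point configuration has largest pairwise distance at least 8. -/

import Mathlib

/-- A family of points is in general position with pairwise integral distances. -/
def GoodConfig {n : ℕ} (P : Fin n → EuclideanSpace ℝ (Fin 2)) : Prop :=
  Function.Injective P ∧
  (∀ i j : Fin n, ∃ m : ℕ, dist (P i) (P j) = m) ∧
  (∀ i j k : Fin n, i ≠ j → i ≠ k → j ≠ k →
    ¬ Collinear ℝ ({P i, P j, P k} : Set (EuclideanSpace ℝ (Fin 2)))) ∧
  (∀ i j k l : Fin n, i ≠ j → i ≠ k → i ≠ l → j ≠ k → j ≠ l → k ≠ l →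
    ¬ ∃ (c : EuclideanSpace ℝ (Fin 2)) (ρ : ℝ), 0 < ρ ∧
        dist (P i) c = ρ ∧ dist (P j) c = ρ ∧ dist (P k) c = ρ ∧ dist (P l) c = ρ)

/-- The configuration has diameter (largest pairwise distance) `d`. -/
def HasDiameter {n : ℕ} (P : Fin n → EuclideanSpace ℝ (Fin 2)) (d : ℝ) : Prop :=
  (∀ i j : Fin n, dist (P i) (P j) ≤ d) ∧ ∃ i j : Fin n, dist (P i) (P j) = d

/-!
The example is the rhombus `(±4, 0), (0, ±3)`, with side `5` and diagonals `8` and `6`.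

For the bound, label the six distances of a configuration of diameter `< 8` as
`a, b, c = |p₀p₁|, |p₀p₂|, |p₀p₃|` and `d, e, f = |p₁p₂|, |p₁p₃|, |p₂p₃|`. They are integers
`< 8` satisfying the strict triangle inequalities, and since the points are planar, the
Cayley–Menger determinant of the squared distances vanishes. A finite search shows that every
such sextuple satisfies Ptolemy's equality `af = be + cd` (or a permutation of it). Then the
Heron form of `af, be, cd` vanishes. It equals four times the square of the incircle determinant
of the four points, so that determinant vanishes too, and the circumcentre of `p₀p₁p₂` is
equidistant from `p₃`.
-/

local notation "ℝ²" => EuclideanSpace ℝ (Fin 2)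

open scoped RealInnerProductSpace

section Algebra

variable {R : Type*} [CommRing R]

/-- Sixteen times the squared area of a triangle whose squared side lengths are `x, y, z`. -/
def heronForm (x y z : R) : R :=
  2 * x * y + 2 * y * z + 2 * z * x - x ^ 2 - y ^ 2 - z ^ 2

theorem heronForm_sq (a b c : R) :
    heronForm (a ^ 2) (b ^ 2) (c ^ 2) = (a + b + c) * (-a + b + c) * (a - b + c) * (a + b - c) := by
  unfold heronForm
  ring

theorem heronForm_sq_eq_zero {a b c : R} (h : a = b + c ∨ b = a + c ∨ c = a + b) :
    heronForm (a ^ 2) (b ^ 2) (c ^ 2) = 0 := by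
  rw [heronForm_sq]
  rcases h with rfl | rfl | rfl <;> ring

theorem heronForm_sq_pos [LinearOrder R] [IsStrictOrderedRing R] {a b c : R} (ha : a < b + c)
    (hb : b < a + c) (hc : c < a + b) :
    0 < heronForm (a ^ 2) (b ^ 2) (c ^ 2) := by
  rw [heronForm_sq]
  have : 0 < a + b + c := by linarith
  have : 0 < -a + b + c := by linarith
  have : 0 < a - b + c := by linarith
  have : 0 < a + b - c := by linarith
  positivity

/-- Eight times the Gram determinant of `p₁ - p₀, p₂ - p₀, p₃ - p₀`, written through the squared
distances `A, B, C = |p₀p₁|², |p₀p₂|², |p₀p₃|²` and `D, E, F = |p₁p₂|², |p₁p₃|², |p₂p₃|²`;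
up to a constant factor it is the Cayley–Menger determinant of the four points. -/
def cayleyMenger (A B C D E F : R) : R :=
  2 * A * (2 * B) * (2 * C) + 2 * (A + B - D) * (A + C - E) * (B + C - F)
    - 2 * A * (B + C - F) ^ 2 - 2 * B * (A + C - E) ^ 2 - 2 * C * (A + B - D) ^ 2

@[simp, norm_cast]
theorem Int.cast_cayleyMenger (A B C D E F : ℤ) :
    ((cayleyMenger A B C D E F : ℤ) : R) = cayleyMenger (A : R) B C D E F := by
  simp [cayleyMenger]

end Algebra

def IsStrictTriangle (a b c : ℕ) : Prop :=
  a < b + c ∧ b < a + c ∧ c < a + b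

instance (a b c : ℕ) : Decidable (IsStrictTriangle a b c) :=
  inferInstanceAs (Decidable (_ ∧ _ ∧ _))

set_option synthInstance.maxSize 32768 in
theorem ptolemy_of_cayleyMenger_eq_zero {a b c d e f : ℕ}
    (ha : a < 8) (hb : b < 8) (hc : c < 8) (hd : d < 8) (he : e < 8) (hf : f < 8)
    (habd : IsStrictTriangle a b d) (hace : IsStrictTriangle a c e)
    (hbcf : IsStrictTriangle b c f) (hdef : IsStrictTriangle d e f)
    (h : cayleyMenger ((a : ℤ) ^ 2) (b ^ 2) (c ^ 2) (d ^ 2) (e ^ 2) (f ^ 2) = 0) :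
    a * f = b * e + c * d ∨ b * e = a * f + c * d ∨ c * d = a * f + b * e := by
  have search : ∀ a < (8 : ℕ), ∀ b < (8 : ℕ), ∀ d < (8 : ℕ), IsStrictTriangle a b d →
      ∀ c < (8 : ℕ), ∀ e < (8 : ℕ), IsStrictTriangle a c e →
      ∀ f < (8 : ℕ), IsStrictTriangle b c f → IsStrictTriangle d e f →
      cayleyMenger ((a : ℤ) ^ 2) (b ^ 2) (c ^ 2) (d ^ 2) (e ^ 2) (f ^ 2) = 0 →
      a * f = b * e + c * d ∨ b * e = a * f + c * d ∨ c * d = a * f + b * e := by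
    decide +kernel
  exact search a ha b hb d hd habd c hc e he hace f hf hbcf hdef h

section StrictConvex

variable {V P : Type*} [NormedAddCommGroup V] [NormedSpace ℝ V] [StrictConvexSpace ℝ V]
  [MetricSpace P] [NormedAddTorsor V P]

theorem not_collinear_iff_dist_lt_dist_add_dist {x y z : P} :
    ¬ Collinear ℝ {x, y, z} ↔ dist x z < dist x y + dist y z ∧
      dist y x < dist y z + dist z x ∧ dist z y < dist z x + dist x y := by
  rw [dist_lt_dist_add_dist_iff, dist_lt_dist_add_dist_iff, dist_lt_dist_add_dist_iff]
  refine ⟨fun h => ⟨fun hw => h hw.collinear, fun hw => h ?_, fun hw => h ?_⟩, ?_⟩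
  · have := hw.collinear
    rwa [Set.pair_comm, Set.insert_comm] at this
  · have := hw.collinear
    rwa [Set.insert_comm, Set.pair_comm] at this
  · rintro ⟨h₁, h₂, h₃⟩ h
    rcases h.wbtw_or_wbtw_or_wbtw with hw | hw | hw
    · exact h₁ hw
    · exact h₂ hw
    · exact h₃ hw

theorem isStrictTriangle_of_not_collinear {x y z : P} {a b c : ℕ} (h : ¬ Collinear ℝ {x, y, z})
    (hxy : dist x y = a) (hxz : dist x z = b) (hyz : dist y z = c) : IsStrictTriangle a b c := by
  obtain ⟨h₁, h₂, h₃⟩ := not_collinear_iff_dist_lt_dist_add_dist.1 h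
  rw [dist_comm y x, dist_comm z x, hxy, hxz, hyz] at h₂
  rw [dist_comm z y, dist_comm z x, hxy, hxz, hyz] at h₃
  rw [hxy, hxz, hyz] at h₁
  norm_cast at h₁ h₂ h₃
  exact ⟨by omega, by omega, by omega⟩

end StrictConvex

theorem norm_sub_eq_norm_of_norm_sq_eq {E : Type*} [NormedAddCommGroup E] [InnerProductSpace ℝ E]
    {x t : E} (h : ‖x‖ ^ 2 = 2 * ⟪x, t⟫) : ‖x - t‖ = ‖t‖ := by
  rw [← sq_eq_sq₀ (norm_nonneg _) (norm_nonneg _), norm_sub_sq_real, h]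
  ring

def cross (u v : ℝ²) : ℝ := u 0 * v 1 - u 1 * v 0

/-- Vanishes iff `0, u, v, w` are concyclic or collinear. -/
noncomputable def incircleDet (u v w : ℝ²) : ℝ :=
  ‖u‖ ^ 2 * cross v w + ‖v‖ ^ 2 * cross w u + ‖w‖ ^ 2 * cross u v

theorem norm_sq_fin_two (u : ℝ²) : ‖u‖ ^ 2 = u 0 ^ 2 + u 1 ^ 2 := by
  simp [EuclideanSpace.real_norm_sq_eq, Fin.sum_univ_two]

theorem dist_sq_fin_two (p q : ℝ²) : dist p q ^ 2 = (p 0 - q 0) ^ 2 + (p 1 - q 1) ^ 2 := by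
  rw [dist_eq_norm, norm_sq_fin_two, PiLp.sub_apply, PiLp.sub_apply]

theorem real_inner_fin_two (x y : ℝ²) : ⟪x, y⟫ = x 0 * y 0 + x 1 * y 1 := by
  simp [PiLp.inner_apply, Fin.sum_univ_two, mul_comm]

theorem cayleyMenger_dist_sq (p₀ p₁ p₂ p₃ : ℝ²) :
    cayleyMenger (dist p₀ p₁ ^ 2) (dist p₀ p₂ ^ 2) (dist p₀ p₃ ^ 2) (dist p₁ p₂ ^ 2)
      (dist p₁ p₃ ^ 2) (dist p₂ p₃ ^ 2) = 0 := by
  simp only [dist_sq_fin_two, cayleyMenger]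
  ring

theorem heronForm_dist_sq (p₀ p₁ p₂ : ℝ²) :
    heronForm (dist p₀ p₁ ^ 2) (dist p₀ p₂ ^ 2) (dist p₁ p₂ ^ 2) =
      4 * cross (p₁ - p₀) (p₂ - p₀) ^ 2 := by
  simp only [dist_sq_fin_two, heronForm, cross, PiLp.sub_apply]
  ring

theorem heronForm_ptolemy_dist_sq (p₀ p₁ p₂ p₃ : ℝ²) :
    heronForm ((dist p₀ p₁ * dist p₂ p₃) ^ 2) ((dist p₀ p₂ * dist p₁ p₃) ^ 2)
      ((dist p₀ p₃ * dist p₁ p₂) ^ 2) = 4 * incircleDet (p₁ - p₀) (p₂ - p₀) (p₃ - p₀) ^ 2 := by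
  simp only [mul_pow, dist_sq_fin_two, incircleDet, norm_sq_fin_two, cross, heronForm,
    PiLp.sub_apply]
  ring

theorem cross_ne_zero_of_not_collinear {p₀ p₁ p₂ : ℝ²} (h : ¬ Collinear ℝ {p₀, p₁, p₂}) :
    cross (p₁ - p₀) (p₂ - p₀) ≠ 0 := by
  obtain ⟨h₁, h₂, h₃⟩ := not_collinear_iff_dist_lt_dist_add_dist.1 h
  rw [dist_comm p₁ p₀, dist_comm p₂ p₀] at h₂
  rw [dist_comm p₂ p₁, dist_comm p₂ p₀] at h₃
  have hpos := heronForm_sq_pos (a := dist p₀ p₁) (b := dist p₀ p₂) (c := dist p₁ p₂)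
    (by linarith) (by linarith) (by linarith)
  rw [heronForm_dist_sq] at hpos
  intro h0
  rw [h0] at hpos
  norm_num at hpos

theorem exists_equidistant_of_incircleDet_eq_zero {u v w : ℝ²} (huv : cross u v ≠ 0)
    (h : incircleDet u v w = 0) :
    ∃ t : ℝ², t ≠ 0 ∧ ‖u - t‖ = ‖t‖ ∧ ‖v - t‖ = ‖t‖ ∧ ‖w - t‖ = ‖t‖ := by
  -- `t` solves `2 ⟪u, t⟫ = ‖u‖²` and `2 ⟪v, t⟫ = ‖v‖²` by Cramer's rule.
  obtain ⟨t, ht₀, ht₁⟩ : ∃ t : ℝ², t 0 = (‖u‖ ^ 2 * v 1 - ‖v‖ ^ 2 * u 1) / (2 * cross u v) ∧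
      t 1 = (‖v‖ ^ 2 * u 0 - ‖u‖ ^ 2 * v 0) / (2 * cross u v) := ⟨!₂[_, _], rfl, rfl⟩
  have hu : ‖u - t‖ = ‖t‖ := norm_sub_eq_norm_of_norm_sq_eq <| by
    rw [real_inner_fin_two, ht₀, ht₁]; field_simp; simp only [cross]; ring
  refine ⟨t, ?_, hu, norm_sub_eq_norm_of_norm_sq_eq ?_, norm_sub_eq_norm_of_norm_sq_eq ?_⟩
  · rintro rfl
    have : u = 0 := by simpa using hu
    simp [this, cross] at huv
  · rw [real_inner_fin_two, ht₀, ht₁]; field_simp; simp only [cross]; ring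
  · rw [real_inner_fin_two, ht₀, ht₁]; field_simp; simp only [incircleDet, cross] at h ⊢; linear_combination h

theorem exists_center_of_ptolemy {p₀ p₁ p₂ p₃ : ℝ²} (h : ¬ Collinear ℝ {p₀, p₁, p₂})
    (hP : dist p₀ p₁ * dist p₂ p₃ = dist p₀ p₂ * dist p₁ p₃ + dist p₀ p₃ * dist p₁ p₂ ∨
      dist p₀ p₂ * dist p₁ p₃ = dist p₀ p₁ * dist p₂ p₃ + dist p₀ p₃ * dist p₁ p₂ ∨
      dist p₀ p₃ * dist p₁ p₂ = dist p₀ p₁ * dist p₂ p₃ + dist p₀ p₂ * dist p₁ p₃) :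
    ∃ (c : ℝ²) (ρ : ℝ), 0 < ρ ∧
      dist p₀ c = ρ ∧ dist p₁ c = ρ ∧ dist p₂ c = ρ ∧ dist p₃ c = ρ := by
  have hJ : incircleDet (p₁ - p₀) (p₂ - p₀) (p₃ - p₀) = 0 := by
    have := heronForm_sq_eq_zero hP
    rw [heronForm_ptolemy_dist_sq] at this
    simpa using this
  obtain ⟨t, ht, h₁, h₂, h₃⟩ :=
    exists_equidistant_of_incircleDet_eq_zero (cross_ne_zero_of_not_collinear h) hJ
  have hdist : ∀ p : ℝ², ‖p - p₀ - t‖ = ‖t‖ → dist p (p₀ + t) = ‖t‖ := fun p hp => by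
    rwa [dist_eq_norm, ← sub_sub]
  exact ⟨p₀ + t, ‖t‖, norm_pos_iff.2 ht, hdist p₀ (by simp), hdist p₁ h₁, hdist p₂ h₂, hdist p₃ h₃⟩

noncomputable def rhombus : Fin 4 → ℝ² :=
  ![!₂[-4, 0], !₂[4, 0], !₂[0, 3], !₂[0, -3]]

def rhombusDist : Fin 4 → Fin 4 → ℕ :=
  ![![0, 8, 5, 5], ![8, 0, 5, 5], ![5, 5, 0, 6], ![5, 5, 6, 0]]

theorem dist_rhombus (i j : Fin 4) : dist (rhombus i) (rhombus j) = rhombusDist i j := by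
  rw [← sq_eq_sq₀ dist_nonneg (Nat.cast_nonneg _), dist_sq_fin_two]
  fin_cases i <;> fin_cases j <;> norm_num [rhombus, rhombusDist]

theorem rhombus_injective : Function.Injective rhombus := by
  intro i j hij
  have h := dist_rhombus i j
  rw [hij, dist_self, eq_comm, Nat.cast_eq_zero] at h
  exact (by decide : ∀ i j : Fin 4, rhombusDist i j = 0 → i = j) i j h

theorem not_collinear_rhombus {i j k : Fin 4} (hij : i ≠ j) (hik : i ≠ k) (hjk : j ≠ k) :
    ¬ Collinear ℝ {rhombus i, rhombus j, rhombus k} := by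
  have htri : ∀ i j k : Fin 4, i ≠ j → i ≠ k → j ≠ k →
      rhombusDist i k < rhombusDist i j + rhombusDist j k := by
    decide
  rw [not_collinear_iff_dist_lt_dist_add_dist]
  simp only [dist_rhombus]
  exact ⟨by exact_mod_cast htri i j k hij hik hjk,
    by exact_mod_cast htri j k i hjk hij.symm hik.symm,
    by exact_mod_cast htri k i j hik.symm hjk.symm hij⟩

theorem not_forall_dist_rhombus_eq (c : ℝ²) (ρ : ℝ) : ¬ ∀ t, dist (rhombus t) c = ρ := by
  intro h
  have e : ∀ t, (rhombus t 0 - c 0) ^ 2 + (rhombus t 1 - c 1) ^ 2 = ρ ^ 2 := fun t => by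
    rw [← h t, dist_sq_fin_two]
  have e₀ := e 0
  have e₁ := e 1
  have e₂ := e 2
  have e₃ := e 3
  simp [rhombus] at e₀ e₁ e₂ e₃
  nlinarith

theorem goodConfig_rhombus : GoodConfig rhombus := by
  refine ⟨rhombus_injective, fun i j => ⟨_, dist_rhombus i j⟩,
    fun i j k => not_collinear_rhombus, fun i j k l hij hik hil hjk hjl hkl => ?_⟩
  rintro ⟨c, ρ, -, hi, hj, hk, hl⟩
  have hcover : ∀ i j k l t : Fin 4, i ≠ j → i ≠ k → i ≠ l → j ≠ k → j ≠ l → k ≠ l →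
      t = i ∨ t = j ∨ t = k ∨ t = l := by
    decide
  refine not_forall_dist_rhombus_eq c ρ fun t => ?_
  rcases hcover i j k l t hij hik hil hjk hjl hkl with rfl | rfl | rfl | rfl <;> assumption

theorem hasDiameter_rhombus : HasDiameter rhombus 8 := by
  have hle : ∀ i j : Fin 4, rhombusDist i j ≤ 8 := by decide
  refine ⟨fun i j => ?_, 0, 1, by simp [dist_rhombus, rhombusDist]⟩
  rw [dist_rhombus]
  exact_mod_cast hle i j

theorem eight_le_dist_of_goodConfig {P : Fin 4 → ℝ²} (hP : GoodConfig P) :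
    ∃ i j : Fin 4, (8 : ℝ) ≤ dist (P i) (P j) := by
  obtain ⟨-, hint, hcol, hcirc⟩ := hP
  by_contra! hlt
  choose m hm using hint
  have h8 : ∀ i j, m i j < 8 := fun i j => by exact_mod_cast hm i j ▸ hlt i j
  have htri : ∀ i j k, i ≠ j → i ≠ k → j ≠ k → IsStrictTriangle (m i j) (m i k) (m j k) :=
    fun i j k hij hik hjk => isStrictTriangle_of_not_collinear (hcol i j k hij hik hjk)
      (hm i j) (hm i k) (hm j k)
  have hplanar : cayleyMenger ((m 0 1 : ℤ) ^ 2) (m 0 2 ^ 2) (m 0 3 ^ 2) (m 1 2 ^ 2) (m 1 3 ^ 2)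
      (m 2 3 ^ 2) = 0 := by
    apply Int.cast_injective (α := ℝ)
    push_cast
    simpa only [hm] using cayleyMenger_dist_sq (P 0) (P 1) (P 2) (P 3)
  have hptolemy := ptolemy_of_cayleyMenger_eq_zero (h8 0 1) (h8 0 2) (h8 0 3) (h8 1 2) (h8 1 3)
    (h8 2 3) (htri 0 1 2 (by decide) (by decide) (by decide))
    (htri 0 1 3 (by decide) (by decide) (by decide)) (htri 0 2 3 (by decide) (by decide) (by decide))
    (htri 1 2 3 (by decide) (by decide) (by decide)) hplanar
  refine hcirc 0 1 2 3 (by decide) (by decide) (by decide) (by decide) (by decide) (by decide)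
    (exists_center_of_ptolemy (hcol 0 1 2 (by decide) (by decide) (by decide)) ?_)
  simp only [hm]
  exact_mod_cast hptolemy

/-- There is an integral quadrilateral in general position with diameter `8`, and every
such configuration has diameter at least `8`. -/
theorem min_diameter_four_points :
    (∃ P : Fin 4 → EuclideanSpace ℝ (Fin 2), GoodConfig P ∧ HasDiameter P 8) ∧
    (∀ P : Fin 4 → EuclideanSpace ℝ (Fin 2), GoodConfig P →
      ∃ i j : Fin 4, (8 : ℝ) ≤ dist (P i) (P j)) :=
  ⟨⟨rhombus, goodConfig_rhombus, hasDiameter_rhombus⟩, fun _ => eight_le_dist_of_goodConfig⟩
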